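/- For any integer n ≥ l ≥ 1, the Gauss valuation v_p(φ_n(T), 1/φ(p^l)) equals 1, where φ(p^l) = p^(l-1)(p-1). -/

import Mathlib

open Polynomial

/-- `φ_n(T) = 1 + (1+T)^(p^(n-1)) + ⋯ + (1+T)^((p-1)p^(n-1))`. -/
noncomputable def phiPoly (p n : ℕ) : Polynomial ℚ :=
  ∑ c ∈ Finset.range p, (1 + Polynomial.X) ^ (c * p ^ (n - 1))

/-- The Gauss valuation `v_p(f, s) = inf_j (v_p(a_j) + j·s)`. -/
noncomputable def gaussVal (p : ℕ) (f : Polynomial ℚ) (s : ℝ) : ℝ :=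
  sInf {v : ℝ | ∃ j ∈ f.support, v = (padicValRat p (f.coeff j) : ℝ) + (j : ℝ) * s}

/-! Modulo `p` the Frobenius gives `(1+T)^(p^k) ≡ 1 + T^(p^k)`, so `φ_n ≡ T^φ(p^n)` and every
coefficient `a_j` with `j ≠ φ(p^n)` is divisible by `p`. Hence `v_p(a_j) + j/φ(p^l) ≥ 1`: through the
valuation when `j < φ(p^l) ≤ φ(p^n)`, through the slope when `j ≥ φ(p^l)`; the constant term `p`
attains `1`. -/

theorem gaussVal_eq_of_forall_le (p : ℕ) (f : ℚ[X]) (s : ℝ) {j₀ : ℕ} (hj₀ : j₀ ∈ f.support)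
    (hle : ∀ j ∈ f.support, (padicValRat p (f.coeff j₀) : ℝ) + j₀ * s ≤
      (padicValRat p (f.coeff j) : ℝ) + j * s) :
    gaussVal p f s = (padicValRat p (f.coeff j₀) : ℝ) + j₀ * s :=
  IsLeast.csInf_eq ⟨⟨j₀, hj₀, rfl⟩, by rintro v ⟨j, hj, rfl⟩; exact hle j hj⟩

theorem sum_range_one_add_X_pow_mul_prime_pow {R : Type*} [CommRing R] (p k : ℕ) [Fact p.Prime]
    [CharP R p] :
    ∑ c ∈ Finset.range p, ((1 : R[X]) + X) ^ (c * p ^ k) = X ^ ((p - 1) * p ^ k) := by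
  set q := p ^ k
  have hfrob : ((1 : R[X]) + X) ^ q = 1 + X ^ q := by
    simpa [q] using add_pow_char_pow (1 : R[X]) X p k
  apply (isRegular_X_pow (R := R) q).right
  calc (∑ c ∈ Finset.range p, ((1 : R[X]) + X) ^ (c * q)) * X ^ q
      = (∑ c ∈ Finset.range p, (1 + X ^ q) ^ c) * ((1 + X ^ q) - 1) := by
        rw [add_sub_cancel_left]
        exact congr_arg (· * X ^ q) <| Finset.sum_congr rfl fun c _ => by rw [mul_comm, pow_mul, hfrob]
    _ = (1 + X ^ q) ^ p - 1 := geom_sum_mul (1 + X ^ q : R[X]) p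
    _ = X ^ ((p - 1) * q) * X ^ q := by
        rw [add_pow_char, one_pow, add_sub_cancel_left, ← pow_mul, ← pow_add, ← add_one_mul,
          Nat.sub_add_cancel (Fact.out : p.Prime).one_le, mul_comm]

theorem prime_dvd_sum_range_choose_mul_pow {p k j : ℕ} (hp : p.Prime) (hj : j ≠ (p - 1) * p ^ k) :
    p ∣ ∑ c ∈ Finset.range p, (c * p ^ k).choose j := by
  have := Fact.mk hp
  rw [← ZMod.natCast_eq_zero_iff]
  have hcoeff := congr_arg (coeff · j) (sum_range_one_add_X_pow_mul_prime_pow (R := ZMod p) p k)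
  simpa [finsetSum_coeff, coeff_one_add_X_pow, coeff_X_pow, hj] using hcoeff

theorem coeff_phiPoly (p n j : ℕ) :
    (phiPoly p n).coeff j = ((∑ c ∈ Finset.range p, (c * p ^ (n - 1)).choose j : ℕ) : ℚ) := by
  simp [phiPoly, coeff_one_add_X_pow]

theorem coeff_zero_phiPoly (p n : ℕ) : (phiPoly p n).coeff 0 = p := by
  simp [coeff_phiPoly]

theorem one_le_padicValRat_coeff_phiPoly {p n j : ℕ} (hp : p.Prime)
    (hj : j ≠ (p - 1) * p ^ (n - 1)) (hcoeff : (phiPoly p n).coeff j ≠ 0) :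
    1 ≤ padicValRat p ((phiPoly p n).coeff j) := by
  have := Fact.mk hp
  rw [coeff_phiPoly] at hcoeff ⊢
  rw [← padicValRat_of_nat, Nat.one_le_cast]
  exact one_le_padicValNat_of_dvd (by exact_mod_cast hcoeff) (prime_dvd_sum_range_choose_mul_pow hp hj)

theorem gaussVal_phiPoly_one_div {p n : ℕ} (hp : p.Prime) {D : ℝ} (hD : 0 < D)
    (hDle : D ≤ ((p - 1) * p ^ (n - 1) : ℕ)) :
    gaussVal p (phiPoly p n) (1 / D) = 1 := by
  have hval₀ : (padicValRat p ((phiPoly p n).coeff 0) : ℝ) + (0 : ℕ) * (1 / D) = 1 := by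
    simp [coeff_zero_phiPoly, padicValRat.self hp.one_lt]
  have hmem₀ : 0 ∈ (phiPoly p n).support := by
    simp [coeff_zero_phiPoly, hp.ne_zero]
  refine (gaussVal_eq_of_forall_le p _ _ hmem₀ fun j hj => ?_).trans hval₀
  rw [hval₀]
  by_cases hjD : D ≤ j
  · have hslope : 1 ≤ (j : ℝ) * (1 / D) := by rwa [mul_one_div, one_le_div hD]
    have hval : (0 : ℝ) ≤ padicValRat p ((phiPoly p n).coeff j) := by
      rw [coeff_phiPoly, ← padicValRat_of_nat]
      positivity
    linarith
  · have hjtop : j ≠ (p - 1) * p ^ (n - 1) := by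
      rintro rfl; exact hjD hDle
    have hval : (1 : ℝ) ≤ padicValRat p ((phiPoly p n).coeff j) := by
      exact_mod_cast one_le_padicValRat_coeff_phiPoly hp hjtop (mem_support_iff.mp hj)
    have hslope : (0 : ℝ) ≤ (j : ℝ) * (1 / D) := by positivity
    linarith

theorem stmt_4_general (p n l : ℕ) (hp : p.Prime) (hn : l ≤ n) :
    gaussVal p (phiPoly p n) (1 / ((p : ℝ) ^ (l - 1) * ((p : ℝ) - 1))) = 1 := by
  have hp1 : (1 : ℝ) < p := by exact_mod_cast hp.one_lt
  refine gaussVal_phiPoly_one_div hp (by positivity) ?_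
  rw [Nat.cast_mul, Nat.cast_sub hp.one_le, Nat.cast_pow, Nat.cast_one, mul_comm]
  gcongr
  exact hp1.le

/-- For any integers `n ≥ l ≥ 1`, the Gauss valuation `v_p(φ_n(T), 1/φ(p^l))` equals `1`,
where `φ(p^l) = p^(l-1)(p-1)`. -/
theorem stmt_4 (p n l : ℕ) (hp : p.Prime) (hodd : Odd p) (hl : 1 ≤ l) (hn : l ≤ n) :
    gaussVal p (phiPoly p n) (1 / ((p : ℝ) ^ (l - 1) * ((p : ℝ) - 1))) = 1 :=
  stmt_4_general p n l hp hn
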